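/- arXiv:1711.02272 — 2 statements merged into one kernel-verified Lean document; each statement's English description precedes it below -/
import Mathlib

section
/- Let G be a finite group and H ≤ G a subgroup. Let ρ_X, ρ_Y, ρ_Z be unitary irreducible representations of G, and for subgroup irreps x_a, y_b, z_c of H let P_{X→a}, P_{Y→b}, P_{Z→c} be projection matrices intertwining the restriction to H with the subgroup irreps. Suppose Γ matrices relate each representation with its conjugate as Γ_W ρ_W(g)* Γ_W† = ρ_{W̄}(g), and suppose the subgroup CG coefficients satisfy Γ_c (M^{(x_a y_b → z_c)})* (Γ_a⁻¹ ⊗ Γ_b⁻¹) = M^{(x̄_a ȳ_b → z̄_c)} and the projections satisfy Γ_c P_{Z→c}* = P_{Z̄→c̄} Γ_Z. If embedding factors E_{c,ab} and Ē_{c̄,āb̄} are defined by P_{Z→c} Z = Σ_{a,b} E_{c,ab} M^{(x_a y_b → z_c)}(P_{X→a} X ⊗ P_{Y→b} Y) (and its conjugate analogue), with Z̄ = Γ_Z Z*, X̄ = Γ_X X*, Ȳ = Γ_Y Y*, then Ē_{c̄,āb̄} = (E_{c,ab})*. -/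
open Matrix Kronecker

/-- Entrywise complex conjugate of a matrix. -/
def conjMat {m n : Type*} (M : Matrix m n ℂ) : Matrix m n ℂ :=
  M.map (starRingEnd ℂ)

/-- Entrywise complex conjugate of a vector. -/
def conjVec {n : Type*} (v : n → ℂ) : n → ℂ :=
  fun i => starRingEnd ℂ (v i)

/-- Kronecker (tensor) product of two vectors. -/
def vecKron {m n : Type*} (x : m → ℂ) (y : n → ℂ) : m × n → ℂ :=
  fun p => x p.1 * y p.2


lemma conjVec_mulVec {m n : Type*} [Fintype n] (M : Matrix m n ℂ) (v : n → ℂ) :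
    conjVec (M *ᵥ v) = conjMat M *ᵥ conjVec v := by
  funext i
  simp [conjVec, conjMat, Matrix.mulVec, dotProduct, map_sum]

lemma conjVec_vecKron {m n : Type*} (u : m → ℂ) (v : n → ℂ) :
    conjVec (vecKron u v) = vecKron (conjVec u) (conjVec v) := by
  funext p
  simp [conjVec, vecKron]

lemma mulVec_sum' {m n ι : Type*} [Fintype n] (s : Finset ι)
    (A : Matrix m n ℂ) (f : ι → n → ℂ) :
    A *ᵥ (∑ i ∈ s, f i) = ∑ i ∈ s, A *ᵥ f i := by
  funext j
  simp only [Matrix.mulVec, dotProduct, Finset.sum_apply, Finset.mul_sum]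
  exact Finset.sum_comm

lemma kron_mulVec_vecKron {m n m' n' : Type*} [Fintype m'] [Fintype n']
    (A : Matrix m m' ℂ) (B : Matrix n n' ℂ) (u : m' → ℂ) (v : n' → ℂ) :
    (A ⊗ₖ B) *ᵥ vecKron u v = vecKron (A *ᵥ u) (B *ᵥ v) := by
  funext p
  simp only [Matrix.mulVec, dotProduct, vecKron, Matrix.kroneckerMap_apply]
  rw [Fintype.sum_prod_type, Finset.sum_mul_sum]
  apply Finset.sum_congr rfl; intro i _
  apply Finset.sum_congr rfl; intro j _
  ring

/-- Proposition 3 of the paper: with the consistent phase conventions on the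
subgroup CG coefficients and on the projection matrices, the embedding factors
of the conjugated tensor product are the complex conjugates of the original
embedding factors. -/
theorem stmt5 {G : Type*} [Group G] [Fintype G] (H : Subgroup G)
    {A B C : Type*} [Fintype A] [Fintype B] [Fintype C]
    {nX nY nZ : ℕ} {dx : A → ℕ} {dy : B → ℕ} {dz : C → ℕ}
    -- unitary irreps of G
    (ρX : G →* Matrix.unitaryGroup (Fin nX) ℂ)
    (ρY : G →* Matrix.unitaryGroup (Fin nY) ℂ)
    (ρZ : G →* Matrix.unitaryGroup (Fin nZ) ℂ)
    -- unitary irreps of the subgroup H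
    (ρa : (a : A) → H →* Matrix.unitaryGroup (Fin (dx a)) ℂ)
    (ρb : (b : B) → H →* Matrix.unitaryGroup (Fin (dy b)) ℂ)
    (ρc : (c : C) → H →* Matrix.unitaryGroup (Fin (dz c)) ℂ)
    -- projection matrices and their barred counterparts
    (PX PXbar : (a : A) → Matrix (Fin (dx a)) (Fin nX) ℂ)
    (PY PYbar : (b : B) → Matrix (Fin (dy b)) (Fin nY) ℂ)
    (PZ PZbar : (c : C) → Matrix (Fin (dz c)) (Fin nZ) ℂ)
    -- the projections intertwine the restriction to H with the subgroup irreps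
    (hPXint : ∀ (a : A) (h : H),
      PX a * (ρX (h : G) : Matrix (Fin nX) (Fin nX) ℂ) = (ρa a h : Matrix (Fin (dx a)) (Fin (dx a)) ℂ) * PX a)
    (hPYint : ∀ (b : B) (h : H),
      PY b * (ρY (h : G) : Matrix (Fin nY) (Fin nY) ℂ) = (ρb b h : Matrix (Fin (dy b)) (Fin (dy b)) ℂ) * PY b)
    (hPZint : ∀ (c : C) (h : H),
      PZ c * (ρZ (h : G) : Matrix (Fin nZ) (Fin nZ) ℂ) = (ρc c h : Matrix (Fin (dz c)) (Fin (dz c)) ℂ) * PZ c)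
    -- unitary Γ matrices relating representations with their conjugates
    (ΓX : Matrix (Fin nX) (Fin nX) ℂ) (hΓX : ΓX ∈ Matrix.unitaryGroup (Fin nX) ℂ)
    (ΓY : Matrix (Fin nY) (Fin nY) ℂ) (hΓY : ΓY ∈ Matrix.unitaryGroup (Fin nY) ℂ)
    (ΓZ : Matrix (Fin nZ) (Fin nZ) ℂ) (hΓZ : ΓZ ∈ Matrix.unitaryGroup (Fin nZ) ℂ)
    (Γa : (a : A) → Matrix (Fin (dx a)) (Fin (dx a)) ℂ)
    (hΓa : ∀ a, Γa a ∈ Matrix.unitaryGroup (Fin (dx a)) ℂ)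
    (Γb : (b : B) → Matrix (Fin (dy b)) (Fin (dy b)) ℂ)
    (hΓb : ∀ b, Γb b ∈ Matrix.unitaryGroup (Fin (dy b)) ℂ)
    (Γc : (c : C) → Matrix (Fin (dz c)) (Fin (dz c)) ℂ)
    (hΓc : ∀ c, Γc c ∈ Matrix.unitaryGroup (Fin (dz c)) ℂ)
    -- subgroup CG coefficients and their barred counterparts,
    -- related by the phase convention (11b)
    (M Mbar : (c : C) → (a : A) → (b : B) → Matrix (Fin (dz c)) (Fin (dx a) × Fin (dy b)) ℂ)
    (hMbar : ∀ c a b,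
      Mbar c a b = Γc c * conjMat (M c a b) * ((Γa a)⁻¹ ⊗ₖ (Γb b)⁻¹))
    -- phase convention (11c) on the projection matrices
    (hPZbar : ∀ c, Γc c * conjMat (PZ c) = PZbar c * ΓZ)
    (hPXbar : ∀ a, Γa a * conjMat (PX a) = PXbar a * ΓX)
    (hPYbar : ∀ b, Γb b * conjMat (PY b) = PYbar b * ΓY)
    -- vectors and embedding factors
    (X : Fin nX → ℂ) (Y : Fin nY → ℂ) (Z : Fin nZ → ℂ)
    (E Ebar : C → A → B → ℂ)
    -- defining equation of the embedding factors
    (hE : ∀ c : C, PZ c *ᵥ Z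
      = ∑ a : A, ∑ b : B, E c a b • (M c a b *ᵥ vecKron (PX a *ᵥ X) (PY b *ᵥ Y)))
    -- defining equation of the barred embedding factors, with
    -- X̄ = Γ_X X*, Ȳ = Γ_Y Y*, Z̄ = Γ_Z Z*
    (hEbar : ∀ c : C, PZbar c *ᵥ (ΓZ *ᵥ conjVec Z)
      = ∑ a : A, ∑ b : B, Ebar c a b •
          (Mbar c a b *ᵥ vecKron (PXbar a *ᵥ (ΓX *ᵥ conjVec X)) (PYbar b *ᵥ (ΓY *ᵥ conjVec Y))))
    -- the barred expansion coefficients are uniquely determined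
    (huniq : ∀ (c : C) (f g : A → B → ℂ),
      (∑ a : A, ∑ b : B, f a b •
          (Mbar c a b *ᵥ vecKron (PXbar a *ᵥ (ΓX *ᵥ conjVec X)) (PYbar b *ᵥ (ΓY *ᵥ conjVec Y))))
        = (∑ a : A, ∑ b : B, g a b •
            (Mbar c a b *ᵥ vecKron (PXbar a *ᵥ (ΓX *ᵥ conjVec X)) (PYbar b *ᵥ (ΓY *ᵥ conjVec Y))))
        → f = g) :
    ∀ (c : C) (a : A) (b : B), Ebar c a b = starRingEnd ℂ (E c a b) := by
  intro c a b
  have key : ∀ (c : C),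
      (∑ a : A, ∑ b : B, (starRingEnd ℂ (E c a b)) •
          (Mbar c a b *ᵥ vecKron (PXbar a *ᵥ (ΓX *ᵥ conjVec X)) (PYbar b *ᵥ (ΓY *ᵥ conjVec Y))))
        = PZbar c *ᵥ (ΓZ *ᵥ conjVec Z) := by
    intro c
    have hterm : ∀ (a : A) (b : B),
        Mbar c a b *ᵥ vecKron (PXbar a *ᵥ (ΓX *ᵥ conjVec X)) (PYbar b *ᵥ (ΓY *ᵥ conjVec Y))
          = Γc c *ᵥ (conjMat (M c a b) *ᵥ
              vecKron (conjVec (PX a *ᵥ X)) (conjVec (PY b *ᵥ Y))) := by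
      intro a b
      have hX : PXbar a *ᵥ (ΓX *ᵥ conjVec X) = Γa a *ᵥ conjVec (PX a *ᵥ X) := by
        rw [Matrix.mulVec_mulVec, ← hPXbar a, ← Matrix.mulVec_mulVec, ← conjVec_mulVec]
      have hY : PYbar b *ᵥ (ΓY *ᵥ conjVec Y) = Γb b *ᵥ conjVec (PY b *ᵥ Y) := by
        rw [Matrix.mulVec_mulVec, ← hPYbar b, ← Matrix.mulVec_mulVec, ← conjVec_mulVec]
      have hua : IsUnit (Γa a) := ⟨⟨Γa a, star (Γa a),
        Matrix.mem_unitaryGroup_iff.mp (hΓa a), Matrix.mem_unitaryGroup_iff'.mp (hΓa a)⟩, rfl⟩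
      have hub : IsUnit (Γb b) := ⟨⟨Γb b, star (Γb b),
        Matrix.mem_unitaryGroup_iff.mp (hΓb b), Matrix.mem_unitaryGroup_iff'.mp (hΓb b)⟩, rfl⟩
      have hia : (Γa a)⁻¹ * Γa a = 1 :=
        Matrix.nonsing_inv_mul _ ((Matrix.isUnit_iff_isUnit_det _).mp hua)
      have hib : (Γb b)⁻¹ * Γb b = 1 :=
        Matrix.nonsing_inv_mul _ ((Matrix.isUnit_iff_isUnit_det _).mp hub)
      rw [hX, hY, hMbar, ← Matrix.mulVec_mulVec, kron_mulVec_vecKron,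
        Matrix.mulVec_mulVec, Matrix.mulVec_mulVec, hia, hib,
        Matrix.one_mulVec, Matrix.one_mulVec, ← Matrix.mulVec_mulVec]
    have hZ : PZbar c *ᵥ (ΓZ *ᵥ conjVec Z) = Γc c *ᵥ conjVec (PZ c *ᵥ Z) := by
      rw [Matrix.mulVec_mulVec, ← hPZbar c, ← Matrix.mulVec_mulVec, ← conjVec_mulVec]
    have hconj : conjVec (PZ c *ᵥ Z) = ∑ a : A, ∑ b : B, (starRingEnd ℂ (E c a b)) •
        (conjMat (M c a b) *ᵥ vecKron (conjVec (PX a *ᵥ X)) (conjVec (PY b *ᵥ Y))) := by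
      rw [hE c]
      funext i
      simp only [conjVec, Finset.sum_apply, Pi.smul_apply, smul_eq_mul, map_sum, RingHom.map_mul]
      refine Finset.sum_congr rfl fun a _ => Finset.sum_congr rfl fun b _ => ?_
      congr 1
      have h1 := congrFun (conjVec_mulVec (M c a b)
        (vecKron (PX a *ᵥ X) (PY b *ᵥ Y))) i
      simp only [conjVec] at h1
      rw [h1, conjVec_vecKron]
    rw [hZ, hconj, mulVec_sum']
    refine Finset.sum_congr rfl fun a _ => ?_
    rw [mulVec_sum']
    refine Finset.sum_congr rfl fun b _ => ?_
    rw [hterm a b, Matrix.mulVec_smul]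
  have := huniq c (fun a b => starRingEnd ℂ (E c a b)) (Ebar c) (by
    rw [key c, hEbar c])
  exact (congrFun (congrFun this a) b).symm
end

section
/- Let η = e^{2πi/7} and define the 3×3 matrices à = (i/√7)·[[η²−η⁵, η−η⁶, η⁴−η³],[η−η⁶, η⁴−η³, η²−η⁵],[η⁴−η³, η²−η⁵, η−η⁶]] and B̃ = (i/√7)·[[η³−η⁶, η³−η, η−1],[η²−1, η⁶−η⁵, η⁶−η²],[η⁵−η⁴, η⁴−1, η⁵−η³]]. Then Ã² = 1, B̃³ = 1, and (ÃB̃)⁷ = 1. -/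
open Matrix

noncomputable section

/-- `η = e^{2πi/7}`. -/
def η7 : ℂ := Complex.exp (2 * Real.pi * Complex.I / 7)

/-- The triplet representation matrix `Ã` of the `PSL(2,7)` generator `A`. -/
def Atilde : Matrix (Fin 3) (Fin 3) ℂ :=
  (Complex.I / (Real.sqrt 7 : ℂ)) •
    !![η7 ^ 2 - η7 ^ 5, η7 - η7 ^ 6, η7 ^ 4 - η7 ^ 3;
       η7 - η7 ^ 6, η7 ^ 4 - η7 ^ 3, η7 ^ 2 - η7 ^ 5;
       η7 ^ 4 - η7 ^ 3, η7 ^ 2 - η7 ^ 5, η7 - η7 ^ 6]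

/-- The triplet representation matrix `B̃` of the `PSL(2,7)` generator `B`. -/
def Btilde : Matrix (Fin 3) (Fin 3) ℂ :=
  (Complex.I / (Real.sqrt 7 : ℂ)) •
    !![η7 ^ 3 - η7 ^ 6, η7 ^ 3 - η7, η7 - 1;
       η7 ^ 2 - 1, η7 ^ 6 - η7 ^ 5, η7 ^ 6 - η7 ^ 2;
       η7 ^ 5 - η7 ^ 4, η7 ^ 4 - 1, η7 ^ 5 - η7 ^ 3]

/-! The matrices are `(i/√7) • M` and `(i/√7) • N` with `M`, `N` over `ℤ[η]`. For any root `ζ`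
of the cyclotomic polynomial `Φ₇`, the Gauss sum `g = ζ + ζ² + ζ⁴ - ζ³ - ζ⁵ - ζ⁶` satisfies
`g² = -7`, and `M² = -7`, `N³ = 7g`, `MN = -7 · diag(ζ, ζ², ζ⁴)` are polynomial identities
modulo `Φ₇(ζ)`. For `η = e^{2πi/7}` the sign of the Gauss sum is `g = i√7`, because
`Im(η + η² + η⁴) = sin(2π/7) + sin(4π/7) - sin(π/7) > 0`. Hence `(i/√7)² = -1/7` and
`(i/√7) g = -1`, which gives `Ã² = 1`, `B̃³ = 1` and `ÃB̃ = diag(η, η², η⁴)`. -/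

section CyclotomicIdentities

variable {R : Type*} [CommRing R]

def tripletA (ζ : R) : Matrix (Fin 3) (Fin 3) R :=
  !![ζ ^ 2 - ζ ^ 5, ζ - ζ ^ 6, ζ ^ 4 - ζ ^ 3;
     ζ - ζ ^ 6, ζ ^ 4 - ζ ^ 3, ζ ^ 2 - ζ ^ 5;
     ζ ^ 4 - ζ ^ 3, ζ ^ 2 - ζ ^ 5, ζ - ζ ^ 6]

def tripletB (ζ : R) : Matrix (Fin 3) (Fin 3) R :=
  !![ζ ^ 3 - ζ ^ 6, ζ ^ 3 - ζ, ζ - 1;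
     ζ ^ 2 - 1, ζ ^ 6 - ζ ^ 5, ζ ^ 6 - ζ ^ 2;
     ζ ^ 5 - ζ ^ 4, ζ ^ 4 - 1, ζ ^ 5 - ζ ^ 3]

def gaussSum7 (ζ : R) : R := ζ + ζ ^ 2 + ζ ^ 4 - ζ ^ 3 - ζ ^ 5 - ζ ^ 6

variable {ζ : R}

theorem gaussSum7_sq (hζ : ∑ i ∈ Finset.range 7, ζ ^ i = 0) : gaussSum7 ζ ^ 2 = -7 := by
  simp only [Finset.sum_range_succ, Finset.sum_range_zero] at hζ
  grind [gaussSum7]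

theorem tripletA_mul_self (hζ : ∑ i ∈ Finset.range 7, ζ ^ i = 0) :
    tripletA ζ * tripletA ζ = (-7 : R) • 1 := by
  simp only [Finset.sum_range_succ, Finset.sum_range_zero] at hζ
  ext i j
  fin_cases i <;> fin_cases j <;> simp [tripletA, mul_apply, Fin.sum_univ_three] <;> grind

theorem tripletB_pow_three (hζ : ∑ i ∈ Finset.range 7, ζ ^ i = 0) :
    tripletB ζ ^ 3 = (7 * gaussSum7 ζ) • 1 := by
  simp only [Finset.sum_range_succ, Finset.sum_range_zero] at hζ
  ext i j
  fin_cases i <;> fin_cases j <;>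
    simp [pow_three, tripletB, gaussSum7, mul_apply, Fin.sum_univ_three, one_apply] <;> grind

theorem tripletA_mul_tripletB (hζ : ∑ i ∈ Finset.range 7, ζ ^ i = 0) :
    tripletA ζ * tripletB ζ = (-7 : R) • diagonal ![ζ, ζ ^ 2, ζ ^ 4] := by
  simp only [Finset.sum_range_succ, Finset.sum_range_zero] at hζ
  ext i j
  fin_cases i <;> fin_cases j <;> simp [tripletA, tripletB, mul_apply, Fin.sum_univ_three] <;> grind

end CyclotomicIdentities

theorem η7_isPrimitiveRoot : IsPrimitiveRoot η7 7 :=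
  Complex.isPrimitiveRoot_exp 7 (by norm_num)

theorem η7_pow_seven : η7 ^ 7 = 1 :=
  η7_isPrimitiveRoot.pow_eq_one

theorem geom_sum_η7 : ∑ i ∈ Finset.range 7, η7 ^ i = 0 :=
  η7_isPrimitiveRoot.geom_sum_eq_zero (by norm_num)

theorem conj_η7 : starRingEnd ℂ η7 = η7 ^ 6 := by
  rw [← Complex.inv_eq_conj (η7_isPrimitiveRoot.norm'_eq_one (by norm_num))]
  exact (eq_inv_of_mul_eq_one_left (by rw [← pow_succ, η7_pow_seven])).symm

theorem im_η7_pow (k : ℕ) : (η7 ^ k).im = Real.sin (2 * Real.pi * k / 7) := by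
  rw [η7, ← Complex.exp_nat_mul, ← Complex.exp_ofReal_mul_I_im]
  congr 2
  push_cast
  ring

theorem im_η7_add_η7_sq_add_η7_pow_four_pos : 0 < (η7 + η7 ^ 2 + η7 ^ 4).im := by
  have hπ := Real.pi_pos
  nth_rw 1 [← pow_one η7]
  simp only [Complex.add_im, im_η7_pow]
  push_cast
  have h2 : 0 < Real.sin (2 * Real.pi * 2 / 7) :=
    Real.sin_pos_of_pos_of_lt_pi (by positivity) (by linarith)
  have h4 : Real.sin (2 * Real.pi * 4 / 7) = -Real.sin (Real.pi / 7) := by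
    rw [← Real.sin_add_pi]; ring_nf
  have h1 : Real.sin (Real.pi / 7) < Real.sin (2 * Real.pi * 1 / 7) :=
    Real.strictMonoOn_sin ⟨by linarith, by linarith⟩ ⟨by linarith, by linarith⟩ (by linarith)
  linarith

theorem gaussSum7_η7 : gaussSum7 η7 = Complex.I * Real.sqrt 7 := by
  set z := η7 + η7 ^ 2 + η7 ^ 4
  have hconj : starRingEnd ℂ z = η7 ^ 3 + η7 ^ 5 + η7 ^ 6 := by
    simp only [z, map_add, map_pow, conj_η7]
    grind [η7_pow_seven]
  have hg : gaussSum7 η7 = ((2 * z.im : ℝ) : ℂ) * Complex.I := by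
    rw [← Complex.sub_conj, hconj, gaussSum7]
    ring
  have hsq : (2 * z.im) ^ 2 = 7 := by
    have := gaussSum7_sq geom_sum_η7
    rw [hg, mul_pow, Complex.I_sq, mul_neg_one, neg_inj] at this
    exact_mod_cast this
  rw [hg, ← hsq, Real.sqrt_sq (by linarith [im_η7_add_η7_sq_add_η7_pow_four_pos]), mul_comm]

theorem I_div_sqrt_seven_sq : (Complex.I / Real.sqrt 7) ^ 2 = -1 / 7 := by
  rw [div_pow, Complex.I_sq, ← Complex.ofReal_pow, Real.sq_sqrt (by norm_num)]
  norm_num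

theorem I_div_sqrt_seven_mul_gaussSum7 : Complex.I / Real.sqrt 7 * gaussSum7 η7 = -1 := by
  have h7 : (Real.sqrt 7 : ℂ) ≠ 0 := by exact_mod_cast (by positivity : Real.sqrt 7 ≠ 0)
  rw [gaussSum7_η7, div_mul_eq_mul_div, ← mul_assoc, Complex.I_mul_I, neg_one_mul, neg_div,
    div_self h7]

theorem Atilde_eq_smul : Atilde = (Complex.I / Real.sqrt 7) • tripletA η7 := rfl

theorem Btilde_eq_smul : Btilde = (Complex.I / Real.sqrt 7) • tripletB η7 := rfl

theorem Atilde_sq : Atilde ^ 2 = 1 := by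
  rw [Atilde_eq_smul, smul_pow, sq (tripletA η7), tripletA_mul_self geom_sum_η7, smul_smul,
    I_div_sqrt_seven_sq]
  norm_num

theorem Btilde_pow_three : Btilde ^ 3 = 1 := by
  rw [Btilde_eq_smul, smul_pow, tripletB_pow_three geom_sum_η7, smul_smul]
  set c := Complex.I / Real.sqrt 7
  have hc : c ^ 3 * (7 * gaussSum7 η7) = 1 := by
    linear_combination 7 * c ^ 2 * I_div_sqrt_seven_mul_gaussSum7 - 7 * I_div_sqrt_seven_sq
  rw [hc, one_smul]

theorem Atilde_mul_Btilde : Atilde * Btilde = diagonal ![η7, η7 ^ 2, η7 ^ 4] := by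
  rw [Atilde_eq_smul, Btilde_eq_smul, smul_mul_smul, tripletA_mul_tripletB geom_sum_η7, smul_smul,
    ← sq, I_div_sqrt_seven_sq]
  norm_num

/-- The triplet matrices of `PSL(2,7)` satisfy `Ã² = 1`, `B̃³ = 1`, and
`(ÃB̃)⁷ = 1`. -/
theorem stmt14 :
    Atilde ^ 2 = 1 ∧ Btilde ^ 3 = 1 ∧ (Atilde * Btilde) ^ 7 = 1 := by
  refine ⟨Atilde_sq, Btilde_pow_three, ?_⟩
  rw [Atilde_mul_Btilde, diagonal_pow, ← diagonal_one]
  congr 1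
  ext i
  fin_cases i <;> simp [← pow_mul, η7_isPrimitiveRoot.pow_eq_one_iff_dvd]

end
end
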